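/- Define deg(a₁⊗⋯⊗aₘ) = deg(a₁)+⋯+deg(aₘ)+m−1 for pure tensors of homogeneous elements aᵢ of a graded algebra A = ⊕_{n≥0}A⁽ⁿ⁾. Then the Nijenhuis product ⋄ on Ш_N(A) is graded: deg(𝔞 ⋄ 𝔟) = deg(𝔞) + deg(𝔟) for homogeneous pure tensors 𝔞, 𝔟 (whenever 𝔞⋄𝔟 ≠ 0). -/
import Mathlib


open TensorProduct

variable (k A : Type*) [CommRing k] [CommRing A] [Algebra k A]

/-- The pure tensor `a₁ ⊗ ⋯ ⊗ aₘ`, realized inside the tensor algebra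
`T(A) = ⊕_{n≥0} A^{⊗n}` as the product `ι a₁ * ⋯ * ι aₘ`. -/
noncomputable def pureTensor (l : List A) : TensorAlgebra k A :=
  (l.map (TensorAlgebra.ι k)).prod

/-- The underlying module `Ш_N(A) = ⊕_{n≥1} A^{⊗n}` of the free commutative Nijenhuis
algebra on `A`: the span of the nonempty pure tensors inside the tensor algebra. -/
noncomputable def ShN : Submodule k (TensorAlgebra k A) :=
  Submodule.span k {x | ∃ l : List A, l ≠ [] ∧ x = pureTensor k A l}

/-- The right-shift operator `P_r(𝔞) = 1_A ⊗ 𝔞`. -/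
noncomputable def Pr : TensorAlgebra k A →ₗ[k] TensorAlgebra k A :=
  LinearMap.mulLeft k (TensorAlgebra.ι k (1 : A))

/-- The defining recursion of the product `⋄` of the free commutative Nijenhuis algebra
`Ш_N(A)`: for pure tensors `𝔞 = a₁ ⊗ 𝔞′ ∈ A^{⊗m}` and `𝔟 = b₁ ⊗ 𝔟′ ∈ A^{⊗n}`,
`𝔞 ⋄ 𝔟 = a₁b₁` if `m = n = 1`, `𝔞 ⋄ 𝔟 = a₁b₁ ⊗ 𝔟′` if `m = 1, n ≥ 2`,
`𝔞 ⋄ 𝔟 = a₁b₁ ⊗ 𝔞′` if `m ≥ 2, n = 1`, and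
`𝔞 ⋄ 𝔟 = a₁b₁ ⊗ (𝔞′ ⋄ (1⊗𝔟′) + (1⊗𝔞′) ⋄ 𝔟′ - 1 ⊗ (𝔞′ ⋄ 𝔟′))` if `m, n ≥ 2`. -/
def NijRec (d : TensorAlgebra k A →ₗ[k] TensorAlgebra k A →ₗ[k] TensorAlgebra k A) : Prop :=
  (∀ a b : A, d (TensorAlgebra.ι k a) (TensorAlgebra.ι k b) = TensorAlgebra.ι k (a * b)) ∧
  (∀ (a b : A) (m : List A), m ≠ [] →
    d (TensorAlgebra.ι k a) (TensorAlgebra.ι k b * pureTensor k A m) =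
      TensorAlgebra.ι k (a * b) * pureTensor k A m) ∧
  (∀ (a b : A) (l : List A), l ≠ [] →
    d (TensorAlgebra.ι k a * pureTensor k A l) (TensorAlgebra.ι k b) =
      TensorAlgebra.ι k (a * b) * pureTensor k A l) ∧
  (∀ (a b : A) (l m : List A), l ≠ [] → m ≠ [] →
    d (TensorAlgebra.ι k a * pureTensor k A l) (TensorAlgebra.ι k b * pureTensor k A m) =
      TensorAlgebra.ι k (a * b) *
        (d (pureTensor k A l) (Pr k A (pureTensor k A m)) +
         d (Pr k A (pureTensor k A l)) (pureTensor k A m) -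
         Pr k A (d (pureTensor k A l) (pureTensor k A m))))


/-- For a grading `𝒜` on `A`, the degree-`n` component of `Ш_N(A)` with respect to the
degree `deg(a₁⊗⋯⊗aₘ) = deg(a₁)+⋯+deg(aₘ)+m-1` on pure tensors of homogeneous elements:
the span of the homogeneous pure tensors of degree `n`. -/
noncomputable def ShDeg (𝒜 : ℕ → Submodule k A) (n : ℕ) : Submodule k (TensorAlgebra k A) :=
  Submodule.span k {x | ∃ (l : List A) (ds : List ℕ), l ≠ [] ∧
    List.Forall₂ (fun a i => a ∈ 𝒜 i) l ds ∧ ds.sum + (l.length - 1) = n ∧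
    x = pureTensor k A l}

lemma pureTensor_cons (a : A) (l : List A) :
    pureTensor k A (a :: l) = TensorAlgebra.ι k a * pureTensor k A l := by
  simp [pureTensor]

lemma Pr_pureTensor (l : List A) :
    Pr k A (pureTensor k A l) = pureTensor k A ((1 : A) :: l) := by
  simp [Pr, pureTensor_cons, LinearMap.mulLeft_apply]

lemma mem_ShDeg (𝒜 : ℕ → Submodule k A) {n : ℕ} (l : List A) (ds : List ℕ)
    (hl : l ≠ []) (hf : List.Forall₂ (fun a i => a ∈ 𝒜 i) l ds)
    (hs : ds.sum + (l.length - 1) = n) :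
    pureTensor k A l ∈ ShDeg k A 𝒜 n :=
  Submodule.subset_span ⟨l, ds, hl, hf, hs, rfl⟩

lemma mulLeft_ShDeg (𝒜 : ℕ → Submodule k A) {c : A} {r : ℕ} (hc : c ∈ 𝒜 r)
    {x : TensorAlgebra k A} {n : ℕ} (hx : x ∈ ShDeg k A 𝒜 n) :
    TensorAlgebra.ι k c * x ∈ ShDeg k A 𝒜 (r + n + 1) := by
  have hle : ShDeg k A 𝒜 n ≤
      (ShDeg k A 𝒜 (r + n + 1)).comap (LinearMap.mulLeft k (TensorAlgebra.ι k c)) := by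
    rw [ShDeg, Submodule.span_le]
    rintro y ⟨l, ds, hl, hf, hs, rfl⟩
    simp only [Set.mem_setOf_eq, SetLike.mem_coe, Submodule.mem_comap, LinearMap.mulLeft_apply]
    rw [← pureTensor_cons]
    refine mem_ShDeg k A 𝒜 (c :: l) (r :: ds) (by simp) (List.Forall₂.cons hc hf) ?_
    have hlen : 1 ≤ l.length := List.length_pos_iff.mpr hl
    simp only [List.sum_cons, List.length_cons]
    omega
  exact hle hx

lemma Pr_ShDeg (𝒜 : ℕ → Submodule k A) (hone : (1 : A) ∈ 𝒜 0)
    {x : TensorAlgebra k A} {n : ℕ} (hx : x ∈ ShDeg k A 𝒜 n) :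
    Pr k A x ∈ ShDeg k A 𝒜 (n + 1) := by
  have := mulLeft_ShDeg k A 𝒜 hone hx
  simpa [Pr, LinearMap.mulLeft_apply] using this

/-- If `A = ⊕_{n≥0} A⁽ⁿ⁾` is a graded unital commutative algebra, then the Nijenhuis
product `⋄` on `Ш_N(A)` is graded: `deg(𝔞 ⋄ 𝔟) = deg 𝔞 + deg 𝔟` for homogeneous pure
tensors `𝔞, 𝔟`, i.e. `𝔞 ⋄ 𝔟` lies in the component of `Ш_N(A)` of degree
`deg 𝔞 + deg 𝔟`. -/
theorem ShN_diamond_graded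
    (d : TensorAlgebra k A →ₗ[k] TensorAlgebra k A →ₗ[k] TensorAlgebra k A)
    (hd : NijRec k A d)
    (𝒜 : ℕ → Submodule k A)
    (hone : (1 : A) ∈ 𝒜 0)
    (hmulA : ∀ (p q : ℕ) (a b : A), a ∈ 𝒜 p → b ∈ 𝒜 q → a * b ∈ 𝒜 (p + q)) :
    ∀ (la lb : List A) (dsa dsb : List ℕ), la ≠ [] → lb ≠ [] →
      List.Forall₂ (fun a i => a ∈ 𝒜 i) la dsa →
      List.Forall₂ (fun b i => b ∈ 𝒜 i) lb dsb →
      d (pureTensor k A la) (pureTensor k A lb) ∈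
        ShDeg k A 𝒜 ((dsa.sum + (la.length - 1)) + (dsb.sum + (lb.length - 1))) := by
  suffices H : ∀ N : ℕ, ∀ (la lb : List A) (dsa dsb : List ℕ),
      la.length + lb.length ≤ N → la ≠ [] → lb ≠ [] →
      List.Forall₂ (fun a i => a ∈ 𝒜 i) la dsa →
      List.Forall₂ (fun b i => b ∈ 𝒜 i) lb dsb →
      d (pureTensor k A la) (pureTensor k A lb) ∈
        ShDeg k A 𝒜 ((dsa.sum + (la.length - 1)) + (dsb.sum + (lb.length - 1))) by
    intro la lb dsa dsb hla hlb hfa hfb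
    exact H (la.length + lb.length) la lb dsa dsb le_rfl hla hlb hfa hfb
  intro N
  induction N with
  | zero =>
    intro la lb _ _ hN hla _ _ _
    exact absurd hN (by cases la <;> simp_all)
  | succ N IH =>
    rintro (_ | ⟨a, l⟩) (_ | ⟨b, m⟩) dsa dsb hN hla hlb hfa hfb
    · exact absurd rfl hla
    · exact absurd rfl hla
    · exact absurd rfl hlb
    rcases hfa with _ | ⟨hp, hfl⟩
    rcases hfb with _ | ⟨hq, hfm⟩
    rename_i p dsl q dsm
    rcases eq_or_ne l [] with rfl | hl
    · rcases eq_or_ne m [] with rfl | hm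
      · -- both singletons
        have h1 : pureTensor k A [a] = TensorAlgebra.ι k a := by simp [pureTensor]
        have h2 : pureTensor k A [b] = TensorAlgebra.ι k b := by simp [pureTensor]
        rw [h1, h2, hd.1 a b]
        rcases hfl; rcases hfm
        have h3 : pureTensor k A [a * b] = TensorAlgebra.ι k (a * b) := by simp [pureTensor]
        rw [← h3]
        exact mem_ShDeg k A 𝒜 [a * b] [p + q] (by simp)
          (List.Forall₂.cons (hmulA p q a b hp hq) List.Forall₂.nil) (by simp)
      · -- la singleton, lb long
        rcases hfl
        have h1 : pureTensor k A [a] = TensorAlgebra.ι k a := by simp [pureTensor]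
        rw [h1, pureTensor_cons, hd.2.1 a b m hm, ← pureTensor_cons]
        refine mem_ShDeg k A 𝒜 ((a * b) :: m) ((p + q) :: dsm) (by simp)
          (List.Forall₂.cons (hmulA p q a b hp hq) hfm) ?_
        have hlen : 1 ≤ m.length := List.length_pos_iff.mpr hm
        simp only [List.sum_cons, List.length_cons, List.sum_nil, List.length_nil]
        omega
    · rcases eq_or_ne m [] with rfl | hm
      · -- la long, lb singleton
        rcases hfm
        have h2 : pureTensor k A [b] = TensorAlgebra.ι k b := by simp [pureTensor]
        rw [h2, pureTensor_cons, hd.2.2.1 a b l hl, ← pureTensor_cons]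
        refine mem_ShDeg k A 𝒜 ((a * b) :: l) ((p + q) :: dsl) (by simp)
          (List.Forall₂.cons (hmulA p q a b hp hq) hfl) ?_
        have hlen : 1 ≤ l.length := List.length_pos_iff.mpr hl
        simp only [List.sum_cons, List.length_cons, List.sum_nil, List.length_nil]
        omega
      · -- both long
        have hlenl : 1 ≤ l.length := List.length_pos_iff.mpr hl
        have hlenm : 1 ≤ m.length := List.length_pos_iff.mpr hm
        rw [pureTensor_cons, pureTensor_cons, hd.2.2.2 a b l m hl hm]
        set T : ℕ := dsl.sum + dsm.sum + l.length + m.length - 1 with hT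
        have hX : d (pureTensor k A l) (Pr k A (pureTensor k A m)) ∈ ShDeg k A 𝒜 T := by
          rw [Pr_pureTensor]
          have := IH l ((1 : A) :: m) dsl (0 :: dsm)
            (by simp at hN ⊢; omega) hl (by simp) hfl (List.Forall₂.cons hone hfm)
          have heq : dsl.sum + (l.length - 1) + ((0 :: dsm).sum + (((1 : A) :: m).length - 1)) = T := by
            simp only [List.sum_cons, List.length_cons]; omega
          rwa [heq] at this
        have hY : d (Pr k A (pureTensor k A l)) (pureTensor k A m) ∈ ShDeg k A 𝒜 T := by
          rw [Pr_pureTensor]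
          have := IH ((1 : A) :: l) m (0 :: dsl) dsm
            (by simp at hN ⊢; omega) (by simp) hm (List.Forall₂.cons hone hfl) hfm
          have heq : (0 :: dsl).sum + (((1 : A) :: l).length - 1) + (dsm.sum + (m.length - 1)) = T := by
            simp only [List.sum_cons, List.length_cons]; omega
          rwa [heq] at this
        have hZ : Pr k A (d (pureTensor k A l) (pureTensor k A m)) ∈ ShDeg k A 𝒜 T := by
          have := IH l m dsl dsm (by simp at hN ⊢; omega) hl hm hfl hfm
          have := Pr_ShDeg k A 𝒜 hone this
          have heq : dsl.sum + (l.length - 1) + (dsm.sum + (m.length - 1)) + 1 = T := by omega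
          rwa [heq] at this
        have hsum : d (pureTensor k A l) (Pr k A (pureTensor k A m)) +
            d (Pr k A (pureTensor k A l)) (pureTensor k A m) -
            Pr k A (d (pureTensor k A l) (pureTensor k A m)) ∈ ShDeg k A 𝒜 T :=
          Submodule.sub_mem _ (Submodule.add_mem _ hX hY) hZ
        have hfin := mulLeft_ShDeg k A 𝒜 (hmulA p q a b hp hq) hsum
        have heq : p + q + T + 1 =
            (p :: dsl).sum + ((a :: l).length - 1) + ((q :: dsm).sum + ((b :: m).length - 1)) := by
          simp only [List.sum_cons, List.length_cons]; omega
        rwa [heq] at hfin
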